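/- Let H be a hypergraph, let φ ∈ (0,1), let γ : E(H) → [0,1], and let x : V(H) → [0,1] be a fractional (γ,φ)-balanced separator in H. Then for every Q ⊆ V(H), every c ∈ Q, and every r ∈ [0,1), γ(B^Q_c(r)) ≤ (φ/(1−r))·γ(V(H)). -/

import Mathlib

open Finset
open scoped ENNReal

/-- A hypergraph: a finite vertex set, a finite set of nonempty hyperedges covering
all vertices. -/
structure Hypergraph' (α : Type*) where
  V : Finset α
  E : Finset (Finset α)
  edge_sub : ∀ e ∈ E, e ⊆ V
  edge_nonempty : ∀ e ∈ E, e.Nonempty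
  no_isolated : ∀ v ∈ V, ∃ e ∈ E, v ∈ e

/-- Degeneracy of a graph restricted to a finite vertex set `W`: the least `d` such that
every nonempty subset has a vertex with at most `d` neighbours inside the subset. -/
noncomputable def degeneracyOn {β : Type*} (G : SimpleGraph β) (W : Finset β) : ℕ :=
  sInf {d : ℕ | ∀ W' ⊆ W, W'.Nonempty → ∃ v ∈ W', ((W' : Set β) ∩ G.neighborSet v).ncard ≤ d}

namespace Hypergraph'

variable {α : Type*}

/-- The primal (Gaifman) graph of a hypergraph. -/
def primal (H : Hypergraph' α) : SimpleGraph α where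
  Adj u v := u ≠ v ∧ ∃ e ∈ H.E, u ∈ e ∧ v ∈ e
  symm := by
    constructor
    rintro u v ⟨hne, e, he, hu, hv⟩
    exact ⟨hne.symm, e, he, hv, hu⟩
  loopless := by
    constructor
    rintro u ⟨hne, -⟩
    exact hne rfl

/-- `S` is an `(A,B)`-separator in `H`: every path of the primal graph from a vertex
of `A` to a vertex of `B` meets `S`. -/
def IsSeparator (H : Hypergraph' α) (A B S : Finset α) : Prop :=
  ∀ a ∈ A, ∀ b ∈ B, ∀ p : H.primal.Walk a b, p.IsPath → ∃ v ∈ p.support, v ∈ S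

/-- `x` is a fractional `(A,B)`-separator in `H`. -/
def IsFracSeparator [DecidableEq α] (H : Hypergraph' α) (A B : Finset α) (x : α → ℝ) : Prop :=
  ∀ a ∈ A, ∀ b ∈ B, ∀ p : H.primal.Walk a b, p.IsPath →
    1 ≤ ∑ w ∈ p.support.toFinset, x w

/-- Fractional edge cover number of a weight function `x` on vertices. -/
noncomputable def fracCover [DecidableEq α] (H : Hypergraph' α) (x : α → ℝ) : ℝ :=
  sInf {c : ℝ | ∃ y : Finset α → ℝ, (∀ e, 0 ≤ y e ∧ y e ≤ 1) ∧
    (∀ v ∈ H.V, x v ≤ ∑ e ∈ H.E, if v ∈ e then y e else 0) ∧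
    c = ∑ e ∈ H.E, y e}

/-- Fractional edge cover number `ρ*_H(S)` of a vertex set. -/
noncomputable def fracCoverSet [DecidableEq α] (H : Hypergraph' α) (S : Finset α) : ℝ :=
  H.fracCover (fun v => if v ∈ S then 1 else 0)

/-- Fractional `E`-edge cover number of `x` (`∞` if no fractional `E`-edge cover exists). -/
noncomputable def fracCoverE [DecidableEq α] (H : Hypergraph' α) (E : Finset (Finset α))
    (x : α → ℝ) : ℝ≥0∞ :=
  sInf {c : ℝ≥0∞ | ∃ y : Finset α → ℝ, (∀ e, 0 ≤ y e ∧ y e ≤ 1) ∧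
    (∀ v ∈ H.V, x v ≤ ∑ e ∈ E, if v ∈ e then y e else 0) ∧
    c = ENNReal.ofReal (∑ e ∈ E, y e)}

/-- Fractional `E`-edge cover number `ρ*_{H,E}(S)` of a vertex set. -/
noncomputable def fracCoverESet [DecidableEq α] (H : Hypergraph' α) (E : Finset (Finset α))
    (S : Finset α) : ℝ≥0∞ :=
  H.fracCoverE E (fun v => if v ∈ S then 1 else 0)

/-- Integral edge cover number `ρ_H(S)`. -/
noncomputable def intCover [DecidableEq α] (H : Hypergraph' α) (S : Finset α) : ℕ :=
  sInf {n : ℕ | ∃ F ⊆ H.E, S ⊆ F.biUnion id ∧ F.card = n}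

/-- Independence number `α_H(R)`: maximum size of a subset of `R` such that no
hyperedge contains two of its vertices. -/
noncomputable def indepNum [DecidableEq α] (H : Hypergraph' α) (R : Finset α) : ℕ :=
  sSup {n : ℕ | ∃ I ⊆ R, (∀ e ∈ H.E, (I ∩ e).card ≤ 1) ∧ I.card = n}

/-- Maximum intersection size `η_H` of two distinct hyperedges. -/
noncomputable def eta [DecidableEq α] (H : Hypergraph' α) : ℕ :=
  sSup {n : ℕ | ∃ e₁ ∈ H.E, ∃ e₂ ∈ H.E, e₁ ≠ e₂ ∧ n = (e₁ ∩ e₂).card}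

/-- The (bipartite) incidence graph of a hypergraph. -/
def incidence (H : Hypergraph' α) : SimpleGraph (α ⊕ Finset α) where
  Adj p q :=
    (∃ v e, p = Sum.inl v ∧ q = Sum.inr e ∧ e ∈ H.E ∧ v ∈ e) ∨
    (∃ v e, p = Sum.inr e ∧ q = Sum.inl v ∧ e ∈ H.E ∧ v ∈ e)
  symm := by
    constructor
    rintro p q (⟨v, e, rfl, rfl, he, hv⟩ | ⟨v, e, rfl, rfl, he, hv⟩)
    · exact Or.inr ⟨v, e, rfl, rfl, he, hv⟩
    · exact Or.inl ⟨v, e, rfl, rfl, he, hv⟩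
  loopless := by
    constructor
    rintro p (⟨v, e, rfl, h, -, -⟩ | ⟨v, e, rfl, h, -, -⟩) <;> exact absurd h (by simp)

/-- `μ_H`: degeneracy of the incidence graph of `H`. -/
noncomputable def mu [DecidableEq α] (H : Hypergraph' α) : ℕ :=
  degeneracyOn H.incidence (H.V.image Sum.inl ∪ H.E.image Sum.inr)

/-- `γ(P) = ∑_{e ∈ E(H) : e ∩ P ≠ ∅} γ(e)`. -/
noncomputable def edgeWeight [DecidableEq α] (H : Hypergraph' α) (γ : Finset α → ℝ)
    (P : Finset α) : ℝ :=
  ∑ e ∈ H.E, if (e ∩ P).Nonempty then γ e else 0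

/-- `u` can reach `v` by a walk of the primal graph avoiding `S`. -/
def ReachOutside (H : Hypergraph' α) (S : Finset α) (u v : α) : Prop :=
  ∃ p : H.primal.Walk u v, ∀ w ∈ p.support, w ∉ S

/-- The connected component of `v` in the primal graph of `H` after deleting `S`. -/
noncomputable def comp (H : Hypergraph' α) (S : Finset α) (v : α) : Finset α := by
  classical exact H.V.filter (fun u => H.ReachOutside S v u)

/-- `S` is a `(γ,φ)`-balanced separator in `H`. -/
def IsGammaBalSep [DecidableEq α] (H : Hypergraph' α) (γ : Finset α → ℝ) (φ : ℝ)
    (S : Finset α) : Prop :=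
  ∀ v ∈ H.V, v ∉ S → H.edgeWeight γ (H.comp S v) ≤ φ * H.edgeWeight γ H.V

/-- `S` is a `(Z,φ)`-balanced separator in `H`. -/
def IsZBalSep [DecidableEq α] (H : Hypergraph' α) (Z : Finset α) (φ : ℝ)
    (S : Finset α) : Prop :=
  ∀ v ∈ H.V, v ∉ S →
    H.fracCoverSet (H.comp S v ∩ Z) ≤ φ * H.fracCoverSet Z

/-- `dist*_{H,x}(u,v)`: the minimum of `1` and the minimum total `x`-weight of a path
from `u` to `v` in the primal graph. -/
noncomputable def dist1 [DecidableEq α] (H : Hypergraph' α) (x : α → ℝ) (u v : α) : ℝ :=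
  sInf ({1} ∪ {c : ℝ | ∃ p : H.primal.Walk u v, p.IsPath ∧ c = ∑ w ∈ p.support.toFinset, x w})

/-- `dist*_{H,x}(e,e') = min_{u ∈ e, v ∈ e'} dist*_{H,x}(u,v)`. -/
noncomputable def distE [DecidableEq α] (H : Hypergraph' α) (x : α → ℝ)
    (e e' : Finset α) : ℝ :=
  sInf {c : ℝ | ∃ u ∈ e, ∃ v ∈ e', c = H.dist1 x u v}

/-- `x` is a fractional `(γ,φ)`-balanced separator in `H`. -/
def IsFracGammaBalSep [DecidableEq α] (H : Hypergraph' α) (γ : Finset α → ℝ) (φ : ℝ)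
    (x : α → ℝ) : Prop :=
  ∀ e ∈ H.E, (1 - φ) * (∑ e' ∈ H.E, γ e') ≤ ∑ e' ∈ H.E, H.distE x e e' * γ e'

/-- The induced subhypergraph `H[Q]` for `Q ⊆ V(H)`. -/
def induce [DecidableEq α] (H : Hypergraph' α) (Q : Finset α) (hQ : Q ⊆ H.V) :
    Hypergraph' α where
  V := Q
  E := (H.E.image (fun e => e ∩ Q)).filter (fun e => e.Nonempty)
  edge_sub := by
    intro e he
    simp only [mem_filter, mem_image] at he
    obtain ⟨⟨e', -, rfl⟩, -⟩ := he
    exact inter_subset_right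
  edge_nonempty := by
    intro e he
    exact (mem_filter.mp he).2
  no_isolated := by
    intro v hv
    obtain ⟨e, he, hve⟩ := H.no_isolated v (hQ hv)
    exact ⟨e ∩ Q, mem_filter.mpr ⟨mem_image.mpr ⟨e, he, rfl⟩,
      ⟨v, mem_inter.mpr ⟨hve, hv⟩⟩⟩, mem_inter.mpr ⟨hve, hv⟩⟩

/-- The ball `B^Q_c(r)` of radius `r` around `c` in `H[Q]` with respect to `x`. -/
noncomputable def ball [DecidableEq α] (H : Hypergraph' α) (x : α → ℝ) (Q : Finset α)
    (hQ : Q ⊆ H.V) (c : α) (r : ℝ) : Finset α := by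
  classical exact Q.filter (fun v => (H.induce Q hQ).dist1 x c v ≤ r)

end Hypergraph'

/-- A tree decomposition of a hypergraph. -/
structure TreeDecomp {α : Type*} (H : Hypergraph' α) where
  ι : Type
  fintype : Fintype ι
  T : SimpleGraph ι
  isTree : T.IsTree
  bag : ι → Finset α
  bag_sub : ∀ t, bag t ⊆ H.V
  bag_conn : ∀ v ∈ H.V, (SimpleGraph.induce {t | v ∈ bag t} T).Connected
  edge_bag : ∀ e ∈ H.E, ∃ t, e ⊆ bag t

/-!
Fix a hyperedge `e₀ ∋ c`. Every hyperedge `e` meeting the ball has `dist*(e₀, e) ≤ r`, since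
paths in `H[Q]` are paths in `H`; hence `(1 - r) γ(B) ≤ ∑ₑ (1 - dist*(e₀, e)) γ(e)`, and the
balance condition at `e₀` bounds the right-hand side by `φ γ(V(H))`.
-/

namespace Hypergraph'

variable {α : Type*} [DecidableEq α] (H : Hypergraph' α) {x : α → ℝ}

lemma edgeWeight_V (γ : Finset α → ℝ) : H.edgeWeight γ H.V = ∑ e ∈ H.E, γ e := by
  refine sum_congr rfl fun e he => if_pos ?_
  obtain ⟨v, hv⟩ := H.edge_nonempty e he
  exact ⟨v, mem_inter.mpr ⟨hv, H.edge_sub e he hv⟩⟩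

lemma induce_primal_le (Q : Finset α) (hQ : Q ⊆ H.V) : (H.induce Q hQ).primal ≤ H.primal := by
  rintro a b ⟨hne, e, he, ha, hb⟩
  simp only [induce, mem_filter, mem_image] at he
  obtain ⟨⟨e', he', rfl⟩, -⟩ := he
  exact ⟨hne, e', he', (mem_inter.mp ha).1, (mem_inter.mp hb).1⟩

lemma bddBelow_dist1_set (hx : ∀ v, 0 ≤ x v) (u v : α) :
    BddBelow ({1} ∪ {c : ℝ | ∃ p : H.primal.Walk u v, p.IsPath ∧
      c = ∑ w ∈ p.support.toFinset, x w}) := by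
  refine ⟨0, ?_⟩
  rintro c (rfl | ⟨p, -, rfl⟩)
  · exact zero_le_one
  · exact sum_nonneg fun w _ => hx w

lemma dist1_nonneg (hx : ∀ v, 0 ≤ x v) (u v : α) : 0 ≤ H.dist1 x u v := by
  refine le_csInf ⟨1, Or.inl rfl⟩ ?_
  rintro c (rfl | ⟨p, -, rfl⟩)
  · exact zero_le_one
  · exact sum_nonneg fun w _ => hx w

lemma dist1_le_one (hx : ∀ v, 0 ≤ x v) (u v : α) : H.dist1 x u v ≤ 1 :=
  csInf_le (H.bddBelow_dist1_set hx u v) (Or.inl rfl)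

lemma dist1_le_dist1_induce (hx : ∀ v, 0 ≤ x v) (Q : Finset α) (hQ : Q ⊆ H.V) (u v : α) :
    H.dist1 x u v ≤ (H.induce Q hQ).dist1 x u v := by
  refine csInf_le_csInf (H.bddBelow_dist1_set hx u v) ⟨1, Or.inl rfl⟩ ?_
  rintro c (rfl | ⟨p, hp, rfl⟩)
  · exact Or.inl rfl
  · refine Or.inr ⟨p.mapLe (H.induce_primal_le Q hQ), hp.mapLe _, ?_⟩
    rw [SimpleGraph.Walk.support_mapLe_eq_support]

lemma distE_le_dist1 (hx : ∀ v, 0 ≤ x v) {e e' : Finset α} {u v : α} (hu : u ∈ e)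
    (hv : v ∈ e') :
    H.distE x e e' ≤ H.dist1 x u v := by
  refine csInf_le ⟨0, ?_⟩ ⟨u, hu, v, hv, rfl⟩
  rintro c ⟨u, -, v, -, rfl⟩
  exact H.dist1_nonneg hx u v

lemma distE_le_one (hx : ∀ v, 0 ≤ x v) {e e' : Finset α} (he : e.Nonempty)
    (he' : e'.Nonempty) : H.distE x e e' ≤ 1 := by
  obtain ⟨u, hu⟩ := he
  obtain ⟨v, hv⟩ := he'
  exact (H.distE_le_dist1 hx hu hv).trans (H.dist1_le_one hx u v)

lemma distE_le_of_mem_ball (hx : ∀ v, 0 ≤ x v) {Q : Finset α} (hQ : Q ⊆ H.V) {c v : α}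
    {r : ℝ} {e₀ e : Finset α} (hc : c ∈ e₀) (hv : v ∈ e) (hvB : v ∈ H.ball x Q hQ c r) :
    H.distE x e₀ e ≤ r :=
  calc H.distE x e₀ e ≤ H.dist1 x c v := H.distE_le_dist1 hx hc hv
    _ ≤ (H.induce Q hQ).dist1 x c v := H.dist1_le_dist1_induce hx Q hQ c v
    _ ≤ r := (mem_filter.mp hvB).2

lemma one_sub_mul_edgeWeight_le (hx : ∀ v, 0 ≤ x v) {γ : Finset α → ℝ} (hγ : ∀ e, 0 ≤ γ e)
    {P e₀ : Finset α} (he₀ : e₀.Nonempty) {r : ℝ}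
    (hP : ∀ e ∈ H.E, (e ∩ P).Nonempty → H.distE x e₀ e ≤ r) :
    (1 - r) * H.edgeWeight γ P ≤ ∑ e ∈ H.E, (1 - H.distE x e₀ e) * γ e := by
  rw [edgeWeight, mul_sum]
  refine sum_le_sum fun e he => ?_
  split_ifs with hmeet
  · exact mul_le_mul_of_nonneg_right (by linarith [hP e he hmeet]) (hγ e)
  · rw [mul_zero]
    exact mul_nonneg (by linarith [H.distE_le_one hx he₀ (H.edge_nonempty e he)]) (hγ e)

variable {H} in
lemma IsFracGammaBalSep.sum_one_sub_distE_mul_le {γ : Finset α → ℝ} {φ : ℝ}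
    (hbal : H.IsFracGammaBalSep γ φ x) {e₀ : Finset α} (he₀ : e₀ ∈ H.E) :
    ∑ e ∈ H.E, (1 - H.distE x e₀ e) * γ e ≤ φ * ∑ e ∈ H.E, γ e := by
  have := hbal e₀ he₀
  simp only [sub_mul, one_mul, sum_sub_distrib]
  linarith

end Hypergraph'

theorem ball_volume_small_general {α : Type*} [DecidableEq α] (H : Hypergraph' α)
    (φ : ℝ)
    (γ : Finset α → ℝ) (hγ01 : ∀ e, 0 ≤ γ e ∧ γ e ≤ 1)
    (x : α → ℝ) (hx01 : ∀ v, 0 ≤ x v ∧ x v ≤ 1)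
    (hbal : H.IsFracGammaBalSep γ φ x)
    (Q : Finset α) (hQ : Q ⊆ H.V) (c : α) (hc : c ∈ Q)
    (r : ℝ) (hr1 : r < 1) :
    H.edgeWeight γ (H.ball x Q hQ c r) ≤ (φ / (1 - r)) * H.edgeWeight γ H.V := by
  have hx : ∀ v, 0 ≤ x v := fun v => (hx01 v).1
  obtain ⟨e₀, he₀, hce₀⟩ := H.no_isolated c (hQ hc)
  have hnear : ∀ e ∈ H.E, (e ∩ H.ball x Q hQ c r).Nonempty → H.distE x e₀ e ≤ r :=
    fun _ _ ⟨_, hv⟩ => H.distE_le_of_mem_ball hx hQ hce₀ (mem_inter.mp hv).1 (mem_inter.mp hv).2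
  have hball : (1 - r) * H.edgeWeight γ (H.ball x Q hQ c r) ≤ φ * ∑ e ∈ H.E, γ e :=
    (H.one_sub_mul_edgeWeight_le hx (fun e => (hγ01 e).1) ⟨c, hce₀⟩ hnear).trans
      (hbal.sum_one_sub_distE_mul_le he₀)
  rw [H.edgeWeight_V, div_mul_eq_mul_div, le_div_iff₀ (by linarith)]
  linarith

/-- Balls of radius `r < 1` around any center have small `γ`-volume:
`γ(B^Q_c(r)) ≤ (φ/(1−r))·γ(V(H))`. -/
theorem ball_volume_small {α : Type*} [DecidableEq α] (H : Hypergraph' α)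
    (φ : ℝ) (hφ0 : 0 < φ) (hφ1 : φ < 1)
    (γ : Finset α → ℝ) (hγ01 : ∀ e, 0 ≤ γ e ∧ γ e ≤ 1)
    (x : α → ℝ) (hx01 : ∀ v, 0 ≤ x v ∧ x v ≤ 1) (hxV : ∀ v ∉ H.V, x v = 0)
    (hbal : H.IsFracGammaBalSep γ φ x)
    (Q : Finset α) (hQ : Q ⊆ H.V) (c : α) (hc : c ∈ Q)
    (r : ℝ) (hr0 : 0 ≤ r) (hr1 : r < 1) :
    H.edgeWeight γ (H.ball x Q hQ c r) ≤ (φ / (1 - r)) * H.edgeWeight γ H.V :=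
  ball_volume_small_general H φ γ hγ01 x hx01 hbal Q hQ c hc r hr1
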